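/- If √f = [a₀; overline(a₁, …, aₙ, 2a₀)] and X, Y are positive integers satisfying X² − f·Y² = ±1, then (X, Y) = (A_{k(n+1)−1}, B_{k(n+1)−1}) for some positive integer k, where Aᵢ/Bᵢ are the convergents of √f. -/

import Mathlib

/-- The pair `(rₖ, sₖ)` of the continued fraction algorithm for `√f`:
`r₀ = 0`, `s₀ = 1`, `r_{k+1} = aₖ sₖ − rₖ`, `s_{k+1} = (f − r_{k+1}²)/sₖ`,
where `aₖ = ⌊(√f + rₖ)/sₖ⌋ = ⌊(⌊√f⌋ + rₖ)/sₖ⌋`. -/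
def cfRS (f : ℕ) : ℕ → ℤ × ℤ
  | 0 => (0, 1)
  | k + 1 =>
    let p := cfRS f k
    let a := Int.fdiv ((Nat.sqrt f : ℤ) + p.1) p.2
    let r' := a * p.2 - p.1
    (r', Int.fdiv ((f : ℤ) - r' ^ 2) p.2)

/-- The `k`-th partial quotient `aₖ` of the continued fraction of `√f`. -/
def cfA (f : ℕ) (k : ℕ) : ℤ :=
  Int.fdiv ((Nat.sqrt f : ℤ) + (cfRS f k).1) (cfRS f k).2

/-- Numerators of the convergents of `√f`, shifted by 2:
`cfNum f (k+2) = Aₖ`, with `A₋₂ = 0`, `A₋₁ = 1`. -/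
def cfNum (f : ℕ) : ℕ → ℤ
  | 0 => 0
  | 1 => 1
  | k + 2 => cfA f k * cfNum f (k + 1) + cfNum f k

/-- Denominators of the convergents of `√f`, shifted by 2:
`cfDen f (k+2) = Bₖ`, with `B₋₂ = 1`, `B₋₁ = 0`. -/
def cfDen (f : ℕ) : ℕ → ℤ
  | 0 => 1
  | 1 => 0
  | k + 2 => cfA f k * cfDen f (k + 1) + cfDen f k

/-- `p` is a period of the (eventually periodic) partial quotient sequence of `√f`. -/
def CFIsPeriod (f p : ℕ) : Prop :=
  0 < p ∧ ∀ k, 1 ≤ k → cfA f (k + p) = cfA f k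

/-- `p` is the (minimal) period of the continued fraction expansion of `√f`. -/
def CFPeriod (f p : ℕ) : Prop :=
  CFIsPeriod f p ∧ ∀ q, CFIsPeriod f q → p ≤ q

/-- `(c, h)` is the fundamental (smallest positive) solution of `c² − f h² = 1`. -/
def IsFundamentalPell (f : ℕ) (c h : ℤ) : Prop :=
  0 < c ∧ 0 < h ∧ c ^ 2 - (f : ℤ) * h ^ 2 = 1 ∧
    ∀ c' h' : ℤ, 0 < c' → 0 < h' → c' ^ 2 - (f : ℤ) * h' ^ 2 = 1 → c ≤ c'

/-!
The complete quotients `αₖ = (√f + rₖ) / sₖ` satisfy `⌊αₖ⌋ = aₖ` and `αₖ₊₁ = 1 / fract αₖ`, so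
`cfA` is Mathlib's continued fraction expansion of `√f` and Legendre's theorem applies: a solution
of `X² − f Y² = ±1` has `|√f − X / Y| < 1 / (2 Y²)`, hence `X / Y = A_{J-1} / B_{J-1}` for some
`J ≥ 1`. The identity `A_{J-1}² − f B_{J-1}² = (−1)^J s_J` forces `s_J = 1`, so `α_J = √f + r_J`
has the fractional part of `α₀ = √f`. The expansion from index `1` on therefore has period `J`, and
the minimal period `n + 1` divides `J`.
-/

theorem Int.fdiv_floor_add_eq_floor_div {K : Type*} [Field K] [LinearOrder K] [IsOrderedRing K]
    [FloorRing K] {x : K} (r : ℤ) {s : ℤ} (hs : 0 < s) :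
    Int.fdiv (⌊x⌋ + r) s = ⌊(x + r) / s⌋ := by
  rw [Int.fdiv_eq_ediv_of_nonneg _ hs.le, Int.floor_div_cast_of_nonneg hs.le, Int.floor_add_intCast]

def cfStep (f : ℕ) (p : ℤ × ℤ) : ℤ × ℤ :=
  let a := Int.fdiv ((Nat.sqrt f : ℤ) + p.1) p.2
  let r' := a * p.2 - p.1
  (r', Int.fdiv ((f : ℤ) - r' ^ 2) p.2)

theorem cfRS_succ (f k : ℕ) : cfRS f (k + 1) = cfStep f (cfRS f k) := rfl

def CFInvariant (f : ℕ) (p : ℤ × ℤ) : Prop :=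
  0 < p.2 ∧ p.2 ∣ (f : ℤ) - p.1 ^ 2 ∧ 0 ≤ p.1 ∧ (p.1 : ℝ) < √f ∧ (p.2 : ℝ) < √f + p.1

section

variable {f : ℕ}

theorem two_le_of_not_isSquare (hns : ¬ IsSquare f) : 2 ≤ f := by
  by_contra! h
  interval_cases f
  exacts [hns ⟨0, rfl⟩, hns ⟨1, rfl⟩]

theorem one_lt_sqrt_of_two_le (hf : 2 ≤ f) : 1 < √(f : ℝ) := by
  rw [Real.lt_sqrt zero_le_one, one_pow]
  exact_mod_cast hf

theorem cfInvariant_zero (hns : ¬ IsSquare f) : CFInvariant f (cfRS f 0) := by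
  have := one_lt_sqrt_of_two_le (two_le_of_not_isSquare hns)
  refine ⟨one_pos, by simp [cfRS], le_rfl, ?_, ?_⟩ <;>
    simp only [cfRS, Int.cast_zero, Int.cast_one, add_zero] <;> linarith

theorem mul_cfStep_snd {p : ℤ × ℤ} (hs : 0 < p.2) (hdvd : p.2 ∣ (f : ℤ) - p.1 ^ 2) :
    p.2 * (cfStep f p).2 = f - (cfStep f p).1 ^ 2 := by
  obtain ⟨r, s⟩ := p
  set a := Int.fdiv ((Nat.sqrt f : ℤ) + r) s
  have hdvd' : s ∣ (f : ℤ) - (a * s - r) ^ 2 := by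
    rw [show (f : ℤ) - (a * s - r) ^ 2 = (f - r ^ 2) + s * ((2 * r - a * s) * a) by ring]
    exact dvd_add hdvd (Dvd.intro _ rfl)
  exact Int.mul_fdiv_cancel' hdvd'

theorem CFInvariant.step (hns : ¬ IsSquare f) {p : ℤ × ℤ} (h : CFInvariant f p) :
    CFInvariant f (cfStep f p) := by
  obtain ⟨hs, hdvd, hr, hrx, hsx⟩ := h
  have hprod := mul_cfStep_snd hs hdvd
  obtain ⟨r, s⟩ := p
  dsimp only at hs hdvd hr hrx hsx hprod ⊢
  set x := √(f : ℝ)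
  have hx2 : x ^ 2 = f := Real.sq_sqrt (Nat.cast_nonneg f)
  have hsR : (0 : ℝ) < s := by exact_mod_cast hs
  set a := ⌊(x + r) / s⌋
  have ha_eq : Int.fdiv ((Nat.sqrt f : ℤ) + r) s = a := by
    rw [← Real.floor_real_sqrt_eq_nat_sqrt, Int.fdiv_floor_add_eq_floor_div r hs]
  have ha1 : (1 : ℝ) ≤ a := by
    exact_mod_cast Int.le_floor.2 (by rw [Int.cast_one, le_div_iff₀ hsR]; linarith)
  have hal : (a : ℝ) * s < x + r := by
    refine lt_of_le_of_ne ((le_div_iff₀ hsR).1 (Int.floor_le _)) fun h => ?_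
    exact (irrational_sqrt_natCast_iff.2 hns) ⟨a * s - r, by push_cast; linarith⟩
  have hau : x + r < (a + 1) * s := (div_lt_iff₀ hsR).1 (Int.lt_floor_add_one _)
  have hr' : ((cfStep f (r, s)).1 : ℝ) = a * s - r := by
    rw [← ha_eq]; push_cast [cfStep]; ring
  set r' := (cfStep f (r, s)).1
  set s' := (cfStep f (r, s)).2
  have hs' : (s : ℝ) * s' = (x - r') * (x + r') := by
    rw [mul_comm (x - _), ← sq_sub_sq, hx2]; exact_mod_cast hprod
  have hr'x : (r' : ℝ) < x := by linarith
  have hsr' : (s : ℝ) < x + r' := by nlinarith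
  have hs'pos : (0 : ℝ) < s' := by nlinarith
  refine ⟨by exact_mod_cast hs'pos, ⟨s, by rw [← hprod]; ring⟩, ?_, hr'x, by nlinarith⟩
  have : (0 : ℝ) < r' := by nlinarith
  exact_mod_cast this.le

end

/-- The complete quotient `αₖ = (√f + rₖ) / sₖ`, i.e. `√f = [a₀; a₁, …, aₖ₋₁, αₖ]`. -/
noncomputable def cfAlpha (f k : ℕ) : ℝ := (√f + (cfRS f k).1) / (cfRS f k).2

theorem cfAlpha_zero (f : ℕ) : cfAlpha f 0 = √f := by simp [cfAlpha, cfRS]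

section

variable {f : ℕ} (hns : ¬ IsSquare f)
include hns

theorem cfInvariant_cfRS (k : ℕ) : CFInvariant f (cfRS f k) := by
  induction k with
  | zero => exact cfInvariant_zero hns
  | succ k ih => exact ih.step hns

theorem cfRS_snd_pos (k : ℕ) : 0 < (cfRS f k).2 := (cfInvariant_cfRS hns k).1

theorem cfRS_snd_mul_succ (k : ℕ) :
    (cfRS f k).2 * (cfRS f (k + 1)).2 = f - (cfRS f (k + 1)).1 ^ 2 :=
  mul_cfStep_snd (cfInvariant_cfRS hns k).1 (cfInvariant_cfRS hns k).2.1

theorem cfA_eq_floor_cfAlpha (k : ℕ) : cfA f k = ⌊cfAlpha f k⌋ := by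
  rw [cfA, cfAlpha, ← Int.fdiv_floor_add_eq_floor_div _ (cfRS_snd_pos hns k),
    Real.floor_real_sqrt_eq_nat_sqrt]

theorem one_le_cfA (k : ℕ) : 1 ≤ cfA f k := by
  obtain ⟨hs, -, -, -, hsx⟩ := cfInvariant_cfRS hns k
  rw [cfA_eq_floor_cfAlpha hns, Int.le_floor, Int.cast_one, cfAlpha,
    le_div_iff₀ (by exact_mod_cast hs)]
  linarith

theorem fract_cfAlpha (k : ℕ) :
    Int.fract (cfAlpha f k) = (√f - (cfRS f (k + 1)).1) / (cfRS f k).2 := by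
  have hs : ((cfRS f k).2 : ℝ) ≠ 0 := by exact_mod_cast (cfRS_snd_pos hns k).ne'
  rw [Int.fract, ← cfA_eq_floor_cfAlpha hns, cfAlpha, cfRS_succ]
  field_simp
  push_cast [cfStep, cfA]
  ring

theorem fract_cfAlpha_ne_zero (k : ℕ) : Int.fract (cfAlpha f k) ≠ 0 := by
  rw [fract_cfAlpha hns]
  exact div_ne_zero (sub_ne_zero.2 (cfInvariant_cfRS hns (k + 1)).2.2.2.1.ne')
    (by exact_mod_cast (cfRS_snd_pos hns k).ne')

theorem inv_fract_cfAlpha (k : ℕ) : (Int.fract (cfAlpha f k))⁻¹ = cfAlpha f (k + 1) := by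
  obtain ⟨hs', -, -, hrx, -⟩ := cfInvariant_cfRS hns (k + 1)
  have hprod : ((cfRS f k).2 : ℝ) * (cfRS f (k + 1)).2 =
      (√f - (cfRS f (k + 1)).1) * (√f + (cfRS f (k + 1)).1) := by
    rw [mul_comm (√f - _), ← sq_sub_sq, Real.sq_sqrt (Nat.cast_nonneg f)]
    exact_mod_cast cfRS_snd_mul_succ hns k
  have hs : ((cfRS f k).2 : ℝ) ≠ 0 := by exact_mod_cast (cfRS_snd_pos hns k).ne'
  have hs' : ((cfRS f (k + 1)).2 : ℝ) ≠ 0 := by exact_mod_cast hs'.ne'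
  rw [fract_cfAlpha hns, cfAlpha, inv_div, div_eq_div_iff (sub_ne_zero.2 hrx.ne') hs', hprod]
  ring

end

section

open GenContFract

variable {f : ℕ} (hns : ¬ IsSquare f)
include hns

theorem intFractPair_stream_sqrt (k : ℕ) :
    IntFractPair.stream (√(f : ℝ)) k = some (IntFractPair.of (cfAlpha f k)) := by
  induction k with
  | zero => rw [IntFractPair.stream_zero, cfAlpha_zero]
  | succ k ih =>
    rw [IntFractPair.stream_succ_of_some ih (fract_cfAlpha_ne_zero hns k)]
    exact congrArg _ (congrArg _ (inv_fract_cfAlpha hns k))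

theorem of_sqrt_s_get? (n : ℕ) :
    (GenContFract.of (√(f : ℝ))).s.get? n = some ⟨1, (cfA f (n + 1) : ℝ)⟩ := by
  rw [get?_of_eq_some_of_succ_get?_intFractPair_stream (intFractPair_stream_sqrt hns (n + 1)),
    cfA_eq_floor_cfAlpha hns]
  rfl

theorem of_sqrt_contsAux (n : ℕ) :
    (GenContFract.of (√(f : ℝ))).contsAux n = ⟨(cfNum f (n + 1) : ℝ), (cfDen f (n + 1) : ℝ)⟩ := by
  induction n using Nat.twoStepInduction with
  | zero => simp [zeroth_contAux_eq_one_zero, cfNum, cfDen]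
  | one =>
    simp [first_contAux_eq_h_one, of_h_eq_floor, cfNum, cfDen, cfA_eq_floor_cfAlpha hns,
      cfAlpha_zero]
  | more n ih₀ ih₁ =>
    rw [contsAux_recurrence (of_sqrt_s_get? hns n) ih₀ ih₁]
    simp only [cfNum.eq_3 f (n + 1), cfDen.eq_3 f (n + 1), Int.cast_add, Int.cast_mul, one_mul]

theorem of_sqrt_convs (n : ℕ) :
    (GenContFract.of (√(f : ℝ))).convs n = cfNum f (n + 2) / cfDen f (n + 2) := by
  rw [conv_eq_conts_a_div_conts_b, nth_cont_eq_succ_nth_contAux, of_sqrt_contsAux hns]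

end

theorem cfNum_mul_cfDen_sub (f k : ℕ) :
    cfNum f (k + 1) * cfDen f k - cfNum f k * cfDen f (k + 1) = (-1) ^ k := by
  induction k with
  | zero => simp [cfNum, cfDen]
  | succ k ih =>
    rw [cfNum.eq_3, cfDen.eq_3, pow_succ]
    linear_combination (-1) * ih

theorem isCoprime_cfNum_cfDen_succ (f k : ℕ) : IsCoprime (cfNum f (k + 1)) (cfDen f (k + 1)) := by
  have hsq : ((-1 : ℤ) ^ k) * (-1) ^ k = 1 := by rw [← pow_add]; exact Even.neg_one_pow ⟨k, rfl⟩
  exact ⟨(-1) ^ k * cfDen f k, -(-1) ^ k * cfNum f k, by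
    linear_combination (-1) ^ k * cfNum_mul_cfDen_sub f k + hsq⟩

section

variable {f : ℕ} (hns : ¬ IsSquare f)
include hns

theorem cfDen_add_two_pos (k : ℕ) : 0 < cfDen f (k + 2) := by
  suffices 0 ≤ cfDen f (k + 1) ∧ 0 < cfDen f (k + 2) from this.2
  induction k with
  | zero => simp [cfDen]
  | succ k ih =>
    refine ⟨ih.2.le, ?_⟩
    rw [cfDen.eq_3]
    nlinarith [one_le_cfA hns (k + 1)]

theorem cfNum_cfDen_relations (k : ℕ) :
    cfNum f (k + 1) = (cfRS f k).1 * cfDen f (k + 1) + (cfRS f k).2 * cfDen f k ∧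
      (f : ℤ) * cfDen f (k + 1) = (cfRS f k).1 * cfNum f (k + 1) + (cfRS f k).2 * cfNum f k := by
  induction k with
  | zero => simp [cfNum, cfDen, cfRS]
  | succ k ih =>
    obtain ⟨h₁, h₂⟩ := ih
    have hprod := cfRS_snd_mul_succ hns k
    have hr : (cfRS f (k + 1)).1 = cfA f k * (cfRS f k).2 - (cfRS f k).1 := rfl
    rw [hr] at hprod ⊢
    rw [cfNum.eq_3, cfDen.eq_3]
    constructor <;> apply mul_left_cancel₀ (cfRS_snd_pos hns k).ne'
    · linear_combination (cfA f k * (cfRS f k).2 - (cfRS f k).1) * h₁ - h₂ -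
        cfDen f (k + 1) * hprod
    · linear_combination (-(f : ℤ)) * h₁ + (cfA f k * (cfRS f k).2 - (cfRS f k).1) * h₂ -
        cfNum f (k + 1) * hprod

theorem cfNum_sq_sub_mul_cfDen_sq (k : ℕ) :
    cfNum f (k + 1) ^ 2 - f * cfDen f (k + 1) ^ 2 = (-1) ^ k * (cfRS f k).2 := by
  obtain ⟨h₁, h₂⟩ := cfNum_cfDen_relations hns k
  linear_combination cfNum f (k + 1) * h₁ - cfDen f (k + 1) * h₂ +
    (cfRS f k).2 * cfNum_mul_cfDen_sub f k

theorem cfRS_snd_eq_one_of_pell {k : ℕ}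
    (hpell : cfNum f (k + 1) ^ 2 - f * cfDen f (k + 1) ^ 2 = 1 ∨
      cfNum f (k + 1) ^ 2 - f * cfDen f (k + 1) ^ 2 = -1) :
    (cfRS f k).2 = 1 := by
  have hpos := cfRS_snd_pos hns k
  rw [cfNum_sq_sub_mul_cfDen_sq hns] at hpell
  rcases neg_one_pow_eq_or ℤ k with h | h <;> rw [h] at hpell <;> omega

end

theorem CFIsPeriod.cfA_add_mul {f p : ℕ} (hp : CFIsPeriod f p) (m : ℕ) {j : ℕ} (hj : 1 ≤ j) :
    cfA f (j + m * p) = cfA f j := by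
  induction m with
  | zero => simp
  | succ m ih => rw [add_mul, one_mul, ← add_assoc, hp.2 _ (by omega), ih]

theorem CFPeriod.dvd {f p J : ℕ} (hp : CFPeriod f p)
    (hJ : ∀ j, 1 ≤ j → cfA f (j + J) = cfA f j) : p ∣ J := by
  refine Nat.dvd_of_mod_eq_zero (by_contra fun h => ?_)
  have hmod : CFIsPeriod f (J % p) := ⟨Nat.pos_of_ne_zero h, fun j hj => by
    calc cfA f (j + J % p) = cfA f (j + J % p + J / p * p) := (hp.1.cfA_add_mul _ (by omega)).symm
      _ = cfA f (j + J) := by rw [add_assoc, Nat.mod_add_div']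
      _ = cfA f j := hJ j hj⟩
  exact absurd (hp.2 _ hmod) (not_le.2 (Nat.mod_lt _ hp.1.1))

section

variable {f : ℕ} (hns : ¬ IsSquare f)
include hns

theorem cfAlpha_add_of_cfRS_snd_eq_one {J : ℕ} (hJ : (cfRS f J).2 = 1) {j : ℕ} (hj : 1 ≤ j) :
    cfAlpha f (j + J) = cfAlpha f j := by
  induction j, hj using Nat.le_induction with
  | base =>
    have hα : cfAlpha f J = √f + (cfRS f J).1 := by simp [cfAlpha, hJ]
    rw [add_comm, ← inv_fract_cfAlpha hns, ← inv_fract_cfAlpha hns, hα, Int.fract_add_intCast,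
      cfAlpha_zero]
  | succ j _ ih =>
    rw [add_right_comm, ← inv_fract_cfAlpha hns, ← inv_fract_cfAlpha hns, ih]

theorem cfA_add_of_cfRS_snd_eq_one {J : ℕ} (hJ : (cfRS f J).2 = 1) (j : ℕ) (hj : 1 ≤ j) :
    cfA f (j + J) = cfA f j := by
  rw [cfA_eq_floor_cfAlpha hns, cfA_eq_floor_cfAlpha hns, cfAlpha_add_of_cfRS_snd_eq_one hns hJ hj]

end

theorem abs_sqrt_sub_div_lt_of_pell {f : ℕ} (hf : 2 ≤ f) {X Y : ℤ} (hX : 0 < X) (hY : 0 < Y)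
    (hpell : X ^ 2 - f * Y ^ 2 = 1 ∨ X ^ 2 - f * Y ^ 2 = -1) :
    |√(f : ℝ) - X / Y| < 1 / (2 * (Y : ℝ) ^ 2) := by
  have hYX : Y ≤ X := by
    have : (2 : ℤ) ≤ f := by exact_mod_cast hf
    rcases hpell with h | h <;> nlinarith
  have hx2 : √(f : ℝ) ^ 2 = f := Real.sq_sqrt (Nat.cast_nonneg f)
  have hx1 := one_lt_sqrt_of_two_le hf
  have hYR : (0 : ℝ) < Y := by exact_mod_cast hY
  have hYXR : (Y : ℝ) ≤ X := by exact_mod_cast hYX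
  have hprod : (√(f : ℝ) - X / Y) * (Y * (X + Y * √f)) = -((X : ℝ) ^ 2 - f * Y ^ 2) := by
    field_simp
    linear_combination (Y : ℝ) ^ 2 * hx2
  have hnorm : |(X : ℝ) ^ 2 - f * Y ^ 2| = 1 := by
    rcases hpell with h | h <;> [rw [show (X : ℝ) ^ 2 - f * Y ^ 2 = 1 by exact_mod_cast h];
      rw [show (X : ℝ) ^ 2 - f * Y ^ 2 = -1 by exact_mod_cast h]] <;> simp
  have hpos : (0 : ℝ) < Y * (X + Y * √f) := by positivity
  have habs : |√(f : ℝ) - X / Y| * (Y * (X + Y * √f)) = 1 := by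
    rw [← abs_of_pos hpos, ← abs_mul, hprod, abs_neg, hnorm]
  rw [eq_div_of_mul_eq hpos.ne' habs]
  exact one_div_lt_one_div_of_lt (by positivity) (by nlinarith)

theorem exists_eq_cfNum_cfDen_of_pell {f : ℕ} (hns : ¬ IsSquare f) {X Y : ℤ} (hX : 0 < X)
    (hY : 0 < Y) (hpell : X ^ 2 - f * Y ^ 2 = 1 ∨ X ^ 2 - f * Y ^ 2 = -1) :
    ∃ m, X = cfNum f (m + 2) ∧ Y = cfDen f (m + 2) := by
  have hcop : Nat.Coprime X.natAbs Y.natAbs := Int.isCoprime_iff_nat_coprime.1 <| by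
    rcases hpell with h | h
    · exact ⟨X, -(f * Y), by linear_combination h⟩
    · exact ⟨-X, f * Y, by linear_combination -h⟩
  obtain ⟨m, hm⟩ := Real.exists_convs_eq_rat (ξ := √(f : ℝ)) (q := X / Y) <| by
    have hden : ((X / Y : ℚ).den : ℝ) = Y := by exact_mod_cast Rat.den_div_eq_of_coprime hY hcop
    rw [hden]
    push_cast
    exact abs_sqrt_sub_div_lt_of_pell (two_le_of_not_isSquare hns) hX hY hpell
  rw [of_sqrt_convs hns] at hm
  obtain ⟨hXm, hYm⟩ := Rat.div_int_inj (cfDen_add_two_pos hns m) hY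
    (Int.isCoprime_iff_nat_coprime.1 (isCoprime_cfNum_cfDen_succ f (m + 1))) hcop
    (by exact_mod_cast hm)
  exact ⟨m, hXm.symm, hYm.symm⟩

theorem stmt_18_general (f n : ℕ) (hns : ¬ IsSquare f)
    (hper : CFPeriod f (n + 1))
    (X Y : ℤ) (hX : 0 < X) (hY : 0 < Y)
    (hpell : X ^ 2 - (f : ℤ) * Y ^ 2 = 1 ∨ X ^ 2 - (f : ℤ) * Y ^ 2 = -1) :
    ∃ k : ℕ, 1 ≤ k ∧ X = cfNum f (k * (n + 1) + 1) ∧ Y = cfDen f (k * (n + 1) + 1) := by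
  obtain ⟨m, rfl, rfl⟩ := exists_eq_cfNum_cfDen_of_pell hns hX hY hpell
  have hs : (cfRS f (m + 1)).2 = 1 := cfRS_snd_eq_one_of_pell hns hpell
  obtain ⟨k, hk⟩ := hper.dvd (cfA_add_of_cfRS_snd_eq_one hns hs)
  have hidx : k * (n + 1) + 1 = m + 2 := by rw [mul_comm, ← hk]
  exact ⟨k, Nat.pos_of_ne_zero (by rintro rfl; omega), by rw [hidx], by rw [hidx]⟩

theorem stmt_18 (f n : ℕ) (hf : 0 < f) (hns : ¬ IsSquare f)
    (hper : CFPeriod f (n + 1)) (hend : cfA f (n + 1) = 2 * cfA f 0)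
    (X Y : ℤ) (hX : 0 < X) (hY : 0 < Y)
    (hpell : X ^ 2 - (f : ℤ) * Y ^ 2 = 1 ∨ X ^ 2 - (f : ℤ) * Y ^ 2 = -1) :
    ∃ k : ℕ, 1 ≤ k ∧ X = cfNum f (k * (n + 1) + 1) ∧ Y = cfDen f (k * (n + 1) + 1) :=
  stmt_18_general f n hns hper X Y hX hY hpell
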